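/- Let M be a loopless matroid on a finite linearly ordered ground set E, B a building set for M, N a nested set, Z ∈ N ∖ max(B), and X ∈ N ∖ {Z}. Then, computing labels of members of τ_Z(N) with respect to the matroid M′ (the direct sum of M|Z and M/Z, whose atoms are ordered by their minimum element of E), one has m_{τ_Z(N)}(τ_Z(X)) = m_N(X) if X ⊆ Z, and m_{τ_Z(N)}(τ_Z(X)) = (m_N(X) ∨ Z) ∖ Z otherwise, where the join m_N(X) ∨ Z is taken in M. -/

import Mathlib

set_option linter.unusedSectionVars false
set_option linter.unusedVariables false
set_option maxHeartbeats 1000000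


open Set Matroid
open scoped Matroid

variable {α : Type*}

/-- Two sets are incomparable under inclusion. -/
def Incomp (X Y : Set α) : Prop := ¬ X ⊆ Y ∧ ¬ Y ⊆ X

/-- The inclusion-maximal elements of a family of sets. -/
def maxB (B : Set (Set α)) : Set (Set α) := {X ∈ B | ∀ Y ∈ B, X ⊆ Y → X = Y}

/-- The rank of a set in a matroid: the largest size of an independent subset. -/
noncomputable def mrank (M : Matroid α) (X : Set α) : ℕ :=
  sSup {n : ℕ | ∃ I ⊆ X, M.Indep I ∧ I.ncard = n}

/-- A matroid is loopless if every singleton of the ground set is independent. -/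
def MLoopless (M : Matroid α) : Prop := ∀ e ∈ M.E, M.Indep {e}

/-- A matroid is connected if its rank function is not additive over any
separation of the ground set into two nonempty parts. -/
def MConnected (M : Matroid α) : Prop :=
  ∀ A B : Set α, A ∪ B = M.E → Disjoint A B → A.Nonempty → B.Nonempty →
    mrank M A + mrank M B ≠ mrank M M.E

/-- A building set for a matroid `M`: a set of nonempty flats containing all nonempty
flats whose restriction is connected, and closed under joins of intersecting members. -/
def IsBuildingSet (M : Matroid α) (B : Set (Set α)) : Prop :=
  (∀ X ∈ B, M.IsFlat X ∧ X.Nonempty) ∧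
  (∀ X, M.IsFlat X → X.Nonempty → MConnected (M.restrict X) → X ∈ B) ∧
  (∀ X ∈ B, ∀ Y ∈ B, (X ∩ Y).Nonempty → M.closure (X ∪ Y) ∈ B)

/-- A nested set of a building set `B`. -/
def IsNested (M : Matroid α) (B N : Set (Set α)) : Prop :=
  N ⊆ B ∧ maxB B ⊆ N ∧
  ∀ S : Set (Set α), S ⊆ N → S.Nontrivial → S.Pairwise Incomp →
    M.closure (⋃₀ S) ∉ B

/-- An inclusion-maximal nested set. -/
def IsMaxNested (M : Matroid α) (B N : Set (Set α)) : Prop :=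
  IsNested M B N ∧ ∀ N', IsNested M B N' → N ⊆ N' → N' = N

/-- An atom of a matroid: a rank-one flat. -/
def IsAtomFlat (M : Matroid α) (A : Set α) : Prop := M.IsFlat A ∧ mrank M A = 1

/-- Atoms are compared by their least elements. -/
def atomLE [Preorder α] (A A' : Set α) : Prop :=
  ∃ a a', IsLeast A a ∧ IsLeast A' a' ∧ a ≤ a'

/-- Strict comparison of atoms by their least elements. -/
def atomLT [Preorder α] (A A' : Set α) : Prop :=
  ∃ a a', IsLeast A a ∧ IsLeast A' a' ∧ a < a'

/-- `A` is an admissible label for `X` within the family `S`: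
an atom contained in `X` but in no member of `S` properly below `X`. -/
def GoodLabel (M : Matroid α) (S : Set (Set α)) (X A : Set α) : Prop :=
  IsAtomFlat M A ∧ A ⊆ X ∧ ∀ Y ∈ S, Y ⊂ X → ¬ A ⊆ Y

/-- `A` is the label `m_S(X)`: the least admissible label for `X` within `S`. -/
def IsMinLabel [Preorder α] (M : Matroid α) (S : Set (Set α)) (X A : Set α) : Prop :=
  GoodLabel M S X A ∧ ∀ A', GoodLabel M S X A' → atomLE A A'

/-- `NLListing M N R L` : `L` is the NL-listing of the remaining family `R`
(labels computed with respect to the whole family `N`), obtained by repeatedly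
plucking the inclusion-minimal member with least label. -/
inductive NLListing [Preorder α] (M : Matroid α) (N : Set (Set α)) :
    Set (Set α) → List (Set α × Set α) → Prop
  | nil : NLListing M N ∅ []
  | cons {R : Set (Set α)} {X A : Set α} {L : List (Set α × Set α)} :
      X ∈ R →
      (∀ Y ∈ R, Y ⊆ X → Y = X) →
      IsMinLabel M N X A →
      (∀ Y ∈ R, (∀ W ∈ R, W ⊆ Y → W = Y) → ∀ A', IsMinLabel M N Y A' → atomLE A A') →
      NLListing M N (R \ {X}) L →
      NLListing M N R ((X, A) :: L)

/-- A descent of a list of atoms at position `i`. -/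
def HasDescentAt [Preorder α] (L : List (Set α)) (i : ℕ) : Prop :=
  ∃ h : i + 1 < L.length, atomLT (L.get ⟨i + 1, h⟩) (L.get ⟨i, Nat.lt_of_succ_lt h⟩)

/-- The indicator vector of a set. -/
noncomputable def indVec (X : Set α) : α → ℝ := X.indicator 1

/-- `v` is the vertex of the nested set `N` for the weight vector `c`. -/
def IsVertex (M : Matroid α) (B : Set (Set α)) (c : Set α → ℝ) (N : Set (Set α))
    (v : α → ℝ) : Prop :=
  (∀ X ∈ N, ∑ᶠ a ∈ X, v a = c X) ∧
  ∃ lam mu : Set α → ℝ,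
    (∀ X ∈ N \ maxB B, 0 < lam X) ∧
    v = (∑ᶠ X ∈ N \ maxB B, lam X • indVec X) + ∑ᶠ Y ∈ maxB B, mu Y • indVec Y

/-- `c` is cubical: every nested set has a unique vertex. -/
def IsCubical (M : Matroid α) (B : Set (Set α)) (c : Set α → ℝ) : Prop :=
  ∀ N, IsNested M B N → ∃! v, IsVertex M B c N v

/-- Lexicographic comparison of vectors in `ℝ^E`. -/
def lexLt [LinearOrder α] (u v : α → ℝ) : Prop :=
  ∃ i, u i < v i ∧ ∀ j, j < i → u j = v j

open Classical in
/-- The map `τ_Z`. -/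
noncomputable def tau (M : Matroid α) (Z X : Set α) : Set α :=
  if X ⊆ Z then X else M.closure (X ∪ Z) \ Z

/-- `MZ` is the contraction `M ／ Z`. -/
def IsContraction (M MZ : Matroid α) (Z : Set α) : Prop :=
  MZ.E = M.E \ Z ∧
  ∀ I : Set α, MZ.Indep I ↔ I ⊆ M.E \ Z ∧ ∃ J, M.IsBasis J Z ∧ M.Indep (I ∪ J)

section Rank

variable {α : Type*} [Fintype α] {M : Matroid α} {I J X Y F G : Set α} {e : α}

lemma exists_isLeast [LinearOrder α] {A : Set α} (hA : A.Nonempty) :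
    ∃ a, IsLeast A a := by
  obtain ⟨a, haA, ha⟩ := Set.exists_min_image A id A.toFinite hA
  exact ⟨a, haA, fun b hb => ha b hb⟩

lemma mrank_set_nonempty (M : Matroid α) (X : Set α) :
    {n : ℕ | ∃ I ⊆ X, M.Indep I ∧ I.ncard = n}.Nonempty :=
  ⟨0, ∅, empty_subset X, M.empty_indep, by simp⟩

lemma mrank_set_bddAbove (M : Matroid α) (X : Set α) :
    BddAbove {n : ℕ | ∃ I ⊆ X, M.Indep I ∧ I.ncard = n} := by
  refine ⟨Fintype.card α, fun n hn => ?_⟩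
  obtain ⟨I, -, -, rfl⟩ := hn
  simpa [Set.ncard_univ, Nat.card_eq_fintype_card] using
    Set.ncard_le_ncard (Set.subset_univ I) Set.finite_univ

lemma indep_ncard_le_mrank (hI : M.Indep I) (hIX : I ⊆ X) : I.ncard ≤ mrank M X :=
  le_csSup (mrank_set_bddAbove M X) ⟨I, hIX, hI, rfl⟩

lemma basis'_mrank_eq (hI : M.IsBasis' I X) : mrank M X = I.ncard := by
  refine le_antisymm (csSup_le (mrank_set_nonempty M X) ?_)
    (indep_ncard_le_mrank hI.indep hI.subset)
  rintro n ⟨J, hJX, hJ, rfl⟩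
  obtain ⟨K, hK, hJK⟩ := hJ.subset_isBasis'_of_subset hJX
  have hKI : K.ncard = I.ncard := by
    have := hK.encard_eq_encard hI
    simp only [Set.ncard_def, this]
  calc J.ncard ≤ K.ncard := Set.ncard_le_ncard hJK K.toFinite
  _ = I.ncard := hKI

lemma basis_mrank_eq (hI : M.IsBasis I X) : mrank M X = I.ncard := basis'_mrank_eq hI.isBasis'

lemma mrank_mono (M : Matroid α) (h : X ⊆ Y) : mrank M X ≤ mrank M Y :=
  csSup_le (mrank_set_nonempty M X) (by
    rintro n ⟨I, hIX, hI, rfl⟩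
    exact indep_ncard_le_mrank hI (hIX.trans h))

lemma mrank_le_ncard (M : Matroid α) (X : Set α) : mrank M X ≤ X.ncard :=
  csSup_le (mrank_set_nonempty M X) (by
    rintro n ⟨I, hIX, _, rfl⟩
    exact Set.ncard_le_ncard hIX X.toFinite)

lemma mrank_closure_eq (M : Matroid α) (X : Set α) : mrank M (M.closure X) = mrank M X := by
  obtain ⟨I, hI⟩ := M.exists_isBasis' X
  rw [basis'_mrank_eq hI, basis_mrank_eq hI.isBasis_closure_right]

lemma indep_mrank_eq (hI : M.Indep I) : mrank M I = I.ncard := basis_mrank_eq hI.isBasis_self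

lemma mrank_empty (M : Matroid α) : mrank M (∅ : Set α) = 0 := by
  have := mrank_le_ncard M (∅ : Set α)
  simpa using this

lemma mrank_union_le (M : Matroid α) (X Y : Set α) :
    mrank M (X ∪ Y) ≤ mrank M X + mrank M Y := by
  obtain ⟨I, hI⟩ := M.exists_isBasis' (X ∪ Y)
  rw [basis'_mrank_eq hI]
  have hsplit : I = (I ∩ X) ∪ (I \ X) := by simp [Set.inter_union_diff]
  calc I.ncard = ((I ∩ X) ∪ (I \ X)).ncard := by rw [← hsplit]
  _ ≤ (I ∩ X).ncard + (I \ X).ncard := Set.ncard_union_le _ _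
  _ ≤ mrank M X + mrank M Y := by
      gcongr
      · exact indep_ncard_le_mrank (hI.indep.subset inter_subset_left) inter_subset_right
      · refine indep_ncard_le_mrank (hI.indep.subset diff_subset) ?_
        intro x hx
        rcases hI.subset hx.1 with h | h
        · exact absurd h hx.2
        · exact h

lemma mrank_submod (hX : X ⊆ M.E) (hY : Y ⊆ M.E) :
    mrank M (X ∪ Y) + mrank M (X ∩ Y) ≤ mrank M X + mrank M Y := by
  obtain ⟨I, hI⟩ := M.exists_isBasis (X ∩ Y) ((inter_subset_left).trans hX)
  obtain ⟨K, hK, hIK⟩ := hI.indep.subset_isBasis_of_subset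
    (hI.subset.trans ((inter_subset_left).trans subset_union_left)) (union_subset hX hY)
  have hKXY : I = K ∩ (X ∩ Y) :=
    hI.eq_of_subset_indep (hK.indep.subset inter_subset_left)
      (subset_inter hIK hI.subset) inter_subset_right
  have hKcover : (K ∩ X) ∪ (K ∩ Y) = K := by
    rw [← Set.inter_union_distrib_left]
    exact inter_eq_self_of_subset_left hK.subset
  have hKinter : (K ∩ X) ∩ (K ∩ Y) = K ∩ (X ∩ Y) := by
    ext x; simp; tauto
  have hcard := Set.ncard_union_add_ncard_inter (K ∩ X) (K ∩ Y) (toFinite _) (toFinite _)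
  rw [hKcover, hKinter, ← hKXY] at hcard
  rw [basis_mrank_eq hK, basis_mrank_eq hI]
  have h1 : (K ∩ X).ncard ≤ mrank M X :=
    indep_ncard_le_mrank (hK.indep.subset inter_subset_left) inter_subset_right
  have h2 : (K ∩ Y).ncard ≤ mrank M Y :=
    indep_ncard_le_mrank (hK.indep.subset inter_subset_left) inter_subset_right
  omega

lemma mrank_insert_of_mem_closure (he : e ∈ M.closure X) (hX : X ⊆ M.E) :
    mrank M (insert e X) = mrank M X := by
  refine le_antisymm ?_ (mrank_mono M (subset_insert _ _))
  have : insert e X ⊆ M.closure X := insert_subset he (M.subset_closure X hX)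
  calc mrank M (insert e X) ≤ mrank M (M.closure X) := mrank_mono M this
  _ = mrank M X := mrank_closure_eq M X

lemma mrank_insert_of_not_mem_closure (heE : e ∈ M.E) (he : e ∉ M.closure X) :
    mrank M (insert e X) = mrank M X + 1 := by
  obtain ⟨I, hI⟩ := M.exists_isBasis' X
  have hIcl : M.closure I = M.closure X := hI.closure_eq_closure
  have heI : e ∉ I := fun h => he (hIcl ▸ M.subset_closure I hI.indep.subset_ground h)
  have hins : M.Indep (insert e I) := by
    rw [hI.indep.insert_indep_iff_of_notMem heI]
    exact ⟨heE, by rwa [hIcl]⟩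
  refine le_antisymm ?_ ?_
  · calc mrank M (insert e X) = mrank M ({e} ∪ X) := by rw [singleton_union]
    _ ≤ mrank M {e} + mrank M X := mrank_union_le M _ _
    _ ≤ 1 + mrank M X := by
        have := mrank_le_ncard M ({e} : Set α)
        simp only [Set.ncard_singleton] at this
        omega
    _ = mrank M X + 1 := by omega
  · have h := indep_ncard_le_mrank hins (insert_subset_insert hI.subset)
    rw [Set.ncard_insert_of_notMem heI I.toFinite] at h
    rwa [basis'_mrank_eq hI]

lemma flat_eq_of_subset_of_mrank_le (hF : M.IsFlat F) (hG : M.IsFlat G) (hFG : F ⊆ G)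
    (h : mrank M G ≤ mrank M F) : F = G := by
  by_contra hne
  obtain ⟨e, heG, heF⟩ := exists_of_ssubset (ssubset_iff_subset_ne.mpr ⟨hFG, hne⟩)
  have heE : e ∈ M.E := hG.subset_ground heG
  have : mrank M (insert e F) = mrank M F + 1 :=
    mrank_insert_of_not_mem_closure heE (by rwa [hF.closure])
  have hle : mrank M (insert e F) ≤ mrank M G := mrank_mono M (insert_subset heG hFG)
  omega

lemma one_le_mrank (hM : MLoopless M) (he : e ∈ X) (heE : e ∈ M.E) : 1 ≤ mrank M X := by
  have := indep_ncard_le_mrank (hM e heE) (singleton_subset_iff.2 he)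
  simpa using this

lemma eq_empty_of_mrank_zero (hM : MLoopless M) (hX : X ⊆ M.E) (h : mrank M X = 0) :
    X = ∅ := by
  by_contra hne
  obtain ⟨e, he⟩ := nonempty_iff_ne_empty.mpr hne
  have := one_le_mrank hM he (hX he)
  omega

lemma nonempty_of_mrank_pos (h : 1 ≤ mrank M X) : X.Nonempty := by
  rw [nonempty_iff_ne_empty]
  rintro rfl
  rw [mrank_empty] at h
  omega

lemma mrank_congr_indep {M₁ M₂ : Matroid α} (h : ∀ I ⊆ X, (M₁.Indep I ↔ M₂.Indep I)) :
    mrank M₁ X = mrank M₂ X := by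
  unfold mrank
  congr 1
  ext n
  constructor
  · rintro ⟨I, hIX, hI, rfl⟩; exact ⟨I, hIX, (h I hIX).1 hI, rfl⟩
  · rintro ⟨I, hIX, hI, rfl⟩; exact ⟨I, hIX, (h I hIX).2 hI, rfl⟩

lemma skew_union_left {X' : Set α} (hXY : Disjoint X Y) (hX : X ⊆ M.E) (hY : Y ⊆ M.E)
    (hr : mrank M (X ∪ Y) = mrank M X + mrank M Y) (hX' : X' ⊆ X) :
    mrank M (X' ∪ Y) = mrank M X' + mrank M Y := by
  refine le_antisymm (mrank_union_le M _ _) ?_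
  have hsub := mrank_submod (M := M) (X := X' ∪ Y) (Y := X)
    (union_subset (hX'.trans hX) hY) hX
  have h1 : (X' ∪ Y) ∪ X = X ∪ Y := by
    rw [union_comm X' Y, union_assoc, union_eq_self_of_subset_left hX', union_comm]
  have h2 : (X' ∪ Y) ∩ X = X' := by
    rw [Set.union_inter_distrib_right, inter_eq_self_of_subset_left hX',
      (hXY.symm.mono_left Subset.rfl).inter_eq, union_empty]
  rw [h1, h2, hr] at hsub
  have := mrank_mono M hX'
  omega

lemma skew_union_right {Y' : Set α} (hXY : Disjoint X Y) (hX : X ⊆ M.E) (hY : Y ⊆ M.E)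
    (hr : mrank M (X ∪ Y) = mrank M X + mrank M Y) (hY' : Y' ⊆ Y) :
    mrank M (X ∪ Y') = mrank M X + mrank M Y' := by
  rw [union_comm, add_comm]
  rw [union_comm, add_comm (mrank M X)] at hr
  exact skew_union_left hXY.symm hY hX hr hY'

end Rank

section Flats

variable {α : Type*} [Fintype α] {M : Matroid α} {S T F G X Y : Set α} {e f : α}

lemma closure_flat' (M : Matroid α) (X : Set α) : M.IsFlat (M.closure X) := by
  haveI : Nonempty ↥{F : Set α | M.IsFlat F ∧ X ∩ M.E ⊆ F} :=
    ⟨⟨M.E, M.ground_isFlat, inter_subset_right⟩⟩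
  rw [Matroid.closure_def, sInter_eq_iInter]
  exact Matroid.IsFlat.iInter (fun i => i.2.1)

lemma flat_of_closure_eq (h : M.closure S = S) : M.IsFlat S := h ▸ closure_flat' M S

lemma flat_inter (hF : M.IsFlat F) (hG : M.IsFlat G) : M.IsFlat (F ∩ G) := by
  refine flat_of_closure_eq (le_antisymm ?_ ?_)
  · exact subset_inter
      ((M.closure_subset_closure inter_subset_left).trans hF.closure.subset)
      ((M.closure_subset_closure inter_subset_right).trans hG.closure.subset)
  · exact M.subset_closure _ ((inter_subset_left).trans hF.subset_ground)

end Flats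

section Parts

/-- `S` is a separator ("part") of the set `F` in `M`. -/
def IsPart {α : Type*} (M : Matroid α) (F S : Set α) : Prop :=
  S ⊆ F ∧ mrank M S + mrank M (F \ S) = mrank M F

variable {α : Type*} [Fintype α] {M : Matroid α} {S T F U V C : Set α} {e f : α}

lemma IsPart.diff (hS : IsPart M F S) : IsPart M F (F \ S) :=
  ⟨diff_subset, by have h := hS.2; rw [Set.diff_diff_cancel_left hS.1]; omega⟩

lemma isPart_self (M : Matroid α) (F : Set α) : IsPart M F F :=
  ⟨Subset.rfl, by simp [mrank_empty]⟩

lemma isPart_empty (M : Matroid α) (F : Set α) : IsPart M F ∅ :=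
  ⟨empty_subset F, by simp [mrank_empty]⟩

lemma mrank_le_split (M : Matroid α) (hS : S ⊆ F) :
    mrank M F ≤ mrank M S + mrank M (F \ S) := by
  calc mrank M F = mrank M (S ∪ (F \ S)) := by rw [union_diff_cancel hS]
  _ ≤ _ := mrank_union_le M _ _

lemma IsPart.inter_union (hFE : F ⊆ M.E) (hS : IsPart M F S) (hT : IsPart M F T) :
    IsPart M F (S ∩ T) ∧ IsPart M F (S ∪ T) := by
  have hSE : S ⊆ M.E := hS.1.trans hFE
  have hTE : T ⊆ M.E := hT.1.trans hFE
  have hsub1 := mrank_submod (M := M) hSE hTE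
  have hsub2 := mrank_submod (M := M) (X := F \ S) (Y := F \ T)
    (diff_subset.trans hFE) (diff_subset.trans hFE)
  have e1 : F \ (S ∩ T) = (F \ S) ∪ (F \ T) := by rw [Set.diff_inter]
  have e2 : F \ (S ∪ T) = (F \ S) ∩ (F \ T) := by
    ext x; simp; tauto
  have c1 := mrank_le_split M (show S ∩ T ⊆ F from (inter_subset_left).trans hS.1)
  have c2 := mrank_le_split M (show S ∪ T ⊆ F from union_subset hS.1 hT.1)
  rw [e1] at c1
  rw [e2] at c2
  have hSsum := hS.2
  have hTsum := hT.2
  constructor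
  · exact ⟨(inter_subset_left).trans hS.1, by rw [e1]; omega⟩
  · exact ⟨union_subset hS.1 hT.1, by rw [e2]; omega⟩

lemma IsPart.inter (hFE : F ⊆ M.E) (hS : IsPart M F S) (hT : IsPart M F T) :
    IsPart M F (S ∩ T) := (hS.inter_union hFE hT).1

lemma IsPart.union (hFE : F ⊆ M.E) (hS : IsPart M F S) (hT : IsPart M F T) :
    IsPart M F (S ∪ T) := (hS.inter_union hFE hT).2

lemma IsPart.skew (hFE : F ⊆ M.E) (hS : IsPart M F S) (hT : T ⊆ F \ S) :
    mrank M (S ∪ T) = mrank M S + mrank M T := by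
  have hr : mrank M (S ∪ (F \ S)) = mrank M S + mrank M (F \ S) := by
    rw [union_diff_cancel hS.1]; exact hS.2.symm
  exact skew_union_right disjoint_sdiff_right (hS.1.trans hFE) (diff_subset.trans hFE) hr hT

lemma IsPart.flat (hM : MLoopless M) (hF : M.IsFlat F) (hS : IsPart M F S) : M.IsFlat S := by
  have hFE := hF.subset_ground
  have hSE : S ⊆ M.E := hS.1.trans hFE
  refine flat_of_closure_eq (le_antisymm ?_ (M.subset_closure S hSE))
  intro e he
  have heF : e ∈ F := by
    have : M.closure S ⊆ F := hF.closure ▸ M.closure_subset_closure hS.1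
    exact this he
  by_contra heS
  have h1 : mrank M (S ∪ {e}) = mrank M S + mrank M {e} :=
    hS.skew hFE (singleton_subset_iff.2 ⟨heF, heS⟩)
  have h2 : mrank M ({e} : Set α) = 1 := by
    refine le_antisymm (by simpa using mrank_le_ncard M ({e} : Set α))
      (one_le_mrank hM rfl (hFE heF))
  have h3 : mrank M (insert e S) = mrank M S := mrank_insert_of_mem_closure he hSE
  rw [union_singleton] at h1
  omega

/-- The connected component of `e` in `M|F`. -/
def comp {α : Type*} (M : Matroid α) (F : Set α) (e : α) : Set α :=
  ⋂₀ {S | IsPart M F S ∧ e ∈ S}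

lemma isPart_sInter (hFE : F ⊆ M.E) {𝒮 : Set (Set α)} (hne : 𝒮.Nonempty)
    (h : ∀ S ∈ 𝒮, IsPart M F S) : IsPart M F (⋂₀ 𝒮) := by
  refine Set.Finite.induction_on
    (motive := fun s _ => s.Nonempty → (∀ S ∈ s, IsPart M F S) → IsPart M F (⋂₀ s))
    𝒮 (Set.toFinite 𝒮) (fun h0 _ => absurd h0 (by simp)) ?_ hne h
  intro a s _ _ ih hne' h'
  rcases s.eq_empty_or_nonempty with rfl | hsne
  · simpa using h' a (mem_insert _ _)
  · rw [sInter_insert]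
    exact (h' a (mem_insert _ _)).inter hFE (ih hsne fun S hS => h' S (mem_insert_of_mem _ hS))

lemma isPart_sUnion (hFE : F ⊆ M.E) {𝒮 : Set (Set α)}
    (h : ∀ S ∈ 𝒮, IsPart M F S) : IsPart M F (⋃₀ 𝒮) := by
  refine Set.Finite.induction_on
    (motive := fun s _ => (∀ S ∈ s, IsPart M F S) → IsPart M F (⋃₀ s))
    𝒮 (Set.toFinite 𝒮) (fun _ => by simpa using isPart_empty M F) ?_ h
  intro a s _ _ ih h'
  rw [sUnion_insert]
  exact (h' a (mem_insert _ _)).union hFE (ih fun S hS => h' S (mem_insert_of_mem _ hS))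

lemma comp_isPart (hFE : F ⊆ M.E) (he : e ∈ F) : IsPart M F (comp M F e) :=
  isPart_sInter hFE ⟨F, isPart_self M F, he⟩ (fun S hS => hS.1)

lemma mem_comp_self (he : e ∈ F) : e ∈ comp M F e :=
  mem_sInter.2 fun _ hS => hS.2

lemma comp_subset_part (hS : IsPart M F S) (he : e ∈ S) : comp M F e ⊆ S :=
  sInter_subset_of_mem ⟨hS, he⟩

lemma comp_subset (hFE : F ⊆ M.E) (he : e ∈ F) : comp M F e ⊆ F :=
  (comp_isPart hFE he).1

lemma comp_eq_of_mem (hFE : F ⊆ M.E) (he : e ∈ F) (hf : f ∈ comp M F e) :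
    comp M F f = comp M F e := by
  have hcompPart := comp_isPart hFE he
  have hsub1 : comp M F f ⊆ comp M F e := comp_subset_part hcompPart hf
  have hef : e ∈ comp M F f := by
    by_contra hef
    have hfF : f ∈ F := (comp_isPart hFE he).1 hf
    have hdiffPart : IsPart M F (F \ comp M F f) := (comp_isPart hFE hfF).diff
    have : comp M F e ⊆ F \ comp M F f := comp_subset_part hdiffPart ⟨he, hef⟩
    exact (this hf).2 (mem_comp_self hfF)
  have hfF : f ∈ F := hcompPart.1 hf
  exact le_antisymm hsub1 (comp_subset_part (comp_isPart hFE hfF) hef)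

lemma part_of_split (hFE : F ⊆ M.E) (hC : IsPart M F C) (hUV : U ∪ V = C)
    (hd : Disjoint U V) (hsum : mrank M U + mrank M V = mrank M C) : IsPart M F U := by
  have hUC : U ⊆ C := hUV ▸ subset_union_left
  have hVC : V ⊆ C := hUV ▸ subset_union_right
  have hVeq : V = C \ U := by
    apply subset_antisymm
    · exact subset_diff.2 ⟨hVC, hd.symm⟩
    · intro x hx
      rcases (hUV ▸ hx.1 : x ∈ U ∪ V) with h | h
      · exact absurd h hx.2
      · exact h
  have hFU : F \ U = V ∪ (F \ C) := by
    rw [hVeq]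
    ext x
    simp only [mem_diff, mem_union]
    constructor
    · rintro ⟨hxF, hxU⟩
      by_cases hxC : x ∈ C
      · exact Or.inl ⟨hxC, hxU⟩
      · exact Or.inr ⟨hxF, hxC⟩
    · rintro (⟨hxC, hxU⟩ | ⟨hxF, hxC⟩)
      · exact ⟨hC.1 hxC, hxU⟩
      · exact ⟨hxF, fun h => hxC (hUC h)⟩
  have hcover := mrank_le_split M (hUC.trans hC.1)
  have hcover2 : mrank M (F \ U) ≤ mrank M V + mrank M (F \ C) := by
    rw [hFU]; exact mrank_union_le M _ _
  have hCsum := hC.2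
  exact ⟨hUC.trans hC.1, by omega⟩

lemma comp_connected (hM : MLoopless M) (hF : M.IsFlat F) (he : e ∈ F) :
    MConnected (M.restrict (comp M F e)) := by
  have hFE := hF.subset_ground
  set C := comp M F e with hCdef
  have hCpart : IsPart M F C := comp_isPart hFE he
  have hCE : C ⊆ M.E := hCpart.1.trans hFE
  intro U V hUV hd hUne hVne hsum
  rw [Matroid.restrict_ground_eq] at hUV
  have hUC : U ⊆ C := hUV ▸ subset_union_left
  have hVC : V ⊆ C := hUV ▸ subset_union_right
  have hrw : ∀ X ⊆ C, mrank (M.restrict C) X = mrank M X := by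
    intro X hX
    refine mrank_congr_indep fun I hI => ?_
    rw [Matroid.restrict_indep_iff]
    exact ⟨fun h => h.1, fun h => ⟨h, hI.trans hX⟩⟩
  rw [Matroid.restrict_ground_eq, hrw U hUC, hrw V hVC, hrw C Subset.rfl] at hsum
  have heC : e ∈ C := mem_comp_self he
  rcases (hUV ▸ heC : e ∈ U ∪ V) with heU | heV
  · have hUpart : IsPart M F U := part_of_split hFE hCpart hUV hd hsum
    have : C ⊆ U := comp_subset_part hUpart heU
    obtain ⟨v, hv⟩ := hVne
    exact hd.ne_of_mem (this (hVC hv)) hv rfl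
  · have hVpart : IsPart M F V :=
      part_of_split hFE hCpart (by rw [union_comm]; exact hUV) hd.symm (by omega)
    have : C ⊆ V := comp_subset_part hVpart heV
    obtain ⟨u, hu⟩ := hUne
    exact hd.ne_of_mem hu (this (hUC hu)) rfl

end Parts

section Nested

variable {α : Type*} [Fintype α] {M : Matroid α} {B N : Set (Set α)} {Y W : Set α}

lemma nested_incomp_disjoint (hB : IsBuildingSet M B) (hN : IsNested M B N)
    (hY : Y ∈ N) (hW : W ∈ N) (h1 : ¬ Y ⊆ W) (h2 : ¬ W ⊆ Y) : Y ∩ W = ∅ := by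
  by_contra hne
  have hJB := hB.2.2 Y (hN.1 hY) W (hN.1 hW) (nonempty_iff_ne_empty.2 hne)
  have hne' : Y ≠ W := fun h => h1 (h ▸ Subset.rfl)
  have hpw : ({Y, W} : Set (Set α)).Pairwise Incomp := by
    intro a ha b hb hab
    rw [Set.mem_insert_iff, Set.mem_singleton_iff] at ha hb
    rcases ha with rfl | rfl <;> rcases hb with rfl | rfl
    · exact absurd rfl hab
    · exact ⟨h1, h2⟩
    · exact ⟨h2, h1⟩
    · exact absurd rfl hab
  have := hN.2.2 {Y, W} (by
      intro S hS
      rw [Set.mem_insert_iff, Set.mem_singleton_iff] at hS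
      rcases hS with rfl | rfl
      · exact hY
      · exact hW)
    (Set.nontrivial_pair hne') hpw
  rw [Set.sUnion_pair] at this
  exact this hJB

lemma nested_trichotomy (hB : IsBuildingSet M B) (hN : IsNested M B N)
    (hY : Y ∈ N) (hW : W ∈ N) : Y ⊆ W ∨ W ⊆ Y ∨ Y ∩ W = ∅ := by
  by_cases h1 : Y ⊆ W
  · exact Or.inl h1
  by_cases h2 : W ⊆ Y
  · exact Or.inr (Or.inl h2)
  exact Or.inr (Or.inr (nested_incomp_disjoint hB hN hY hW h1 h2))

lemma nested_union_eq (hM : MLoopless M) (hB : IsBuildingSet M B) (hN : IsNested M B N)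
    (hY : Y ∈ N) (hW : W ∈ N) (h1 : ¬ Y ⊆ W) (h2 : ¬ W ⊆ Y) :
    M.closure (Y ∪ W) = Y ∪ W ∧ mrank M (Y ∪ W) = mrank M Y + mrank M W := by
  have hYB := hN.1 hY
  have hWB := hN.1 hW
  obtain ⟨hYflat, hYne⟩ := hB.1 Y hYB
  obtain ⟨hWflat, hWne⟩ := hB.1 W hWB
  have hYE := hYflat.subset_ground
  have hWE := hWflat.subset_ground
  have hUWE : Y ∪ W ⊆ M.E := union_subset hYE hWE
  set F := M.closure (Y ∪ W) with hFdef
  have hFflat : M.IsFlat F := closure_flat' M _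
  have hFE : F ⊆ M.E := hFflat.subset_ground
  have hsubF : Y ∪ W ⊆ F := M.subset_closure _ hUWE
  have hFne : F.Nonempty := hYne.mono (subset_union_left.trans hsubF)
  have hne' : Y ≠ W := fun h => h1 (h ▸ Subset.rfl)
  have hFnotB : F ∉ B := by
    have hpw : ({Y, W} : Set (Set α)).Pairwise Incomp := by
      intro a ha b hb hab
      rw [Set.mem_insert_iff, Set.mem_singleton_iff] at ha hb
      rcases ha with rfl | rfl <;> rcases hb with rfl | rfl
      · exact absurd rfl hab
      · exact ⟨h1, h2⟩
      · exact ⟨h2, h1⟩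
      · exact absurd rfl hab
    have := hN.2.2 {Y, W} (by
        intro S hS
        rw [Set.mem_insert_iff, Set.mem_singleton_iff] at hS
        rcases hS with rfl | rfl
        · exact hY
        · exact hW)
      (Set.nontrivial_pair hne') hpw
    rwa [Set.sUnion_pair] at this
  have hdisc : ¬ MConnected (M.restrict F) := fun hc => hFnotB (hB.2.1 F hFflat hFne hc)
  rw [MConnected] at hdisc
  push_neg at hdisc
  obtain ⟨P, Q, hPQ, hd, hPne, hQne, hsum⟩ := hdisc
  rw [Matroid.restrict_ground_eq] at hPQ
  have hrw : ∀ X ⊆ F, mrank (M.restrict F) X = mrank M X := fun X hX =>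
    mrank_congr_indep fun I hI => by
      rw [Matroid.restrict_indep_iff]; exact ⟨fun h => h.1, fun h => ⟨h, hI.trans hX⟩⟩
  rw [Matroid.restrict_ground_eq, hrw P (hPQ ▸ subset_union_left),
    hrw Q (hPQ ▸ subset_union_right), hrw F Subset.rfl] at hsum
  set UY := ⋃₀ ((comp M F) '' Y) with hUYdef
  set UW := ⋃₀ ((comp M F) '' W) with hUWdef
  have hYF : Y ⊆ F := subset_union_left.trans hsubF
  have hWF : W ⊆ F := subset_union_right.trans hsubF
  have hUYpart : IsPart M F UY := isPart_sUnion hFE (by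
    rintro S ⟨y, hy, rfl⟩; exact comp_isPart hFE (hYF hy))
  have hUWpart : IsPart M F UW := isPart_sUnion hFE (by
    rintro S ⟨w, hw, rfl⟩; exact comp_isPart hFE (hWF hw))
  have hYUY : Y ⊆ UY := fun y hy => ⟨comp M F y, ⟨y, hy, rfl⟩, mem_comp_self (hYF hy)⟩
  have hWUW : W ⊆ UW := fun w hw => ⟨comp M F w, ⟨w, hw, rfl⟩, mem_comp_self (hWF hw)⟩
  have hUYflat : M.IsFlat UY := hUYpart.flat hM hFflat
  have hUWflat : M.IsFlat UW := hUWpart.flat hM hFflat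
  -- the join of V with all components it meets lies in B
  have hjoin : ∀ (V : Set α), V ∈ B → M.IsFlat V → V ⊆ F →
      ∀ 𝒟 : Set (Set α), 𝒟 ⊆ (comp M F) '' V → M.closure (V ∪ ⋃₀ 𝒟) ∈ B := by
    intro V hVB hVflat hVF 𝒟
    refine Set.Finite.induction_on
      (motive := fun 𝒟 _ => 𝒟 ⊆ (comp M F) '' V → M.closure (V ∪ ⋃₀ 𝒟) ∈ B)
      𝒟 (Set.toFinite 𝒟) (fun _ => by rw [sUnion_empty, union_empty, hVflat.closure]; exact hVB) ?_
    intro Ccur s _ _ ih hsub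
    obtain ⟨v, hvV, rfl⟩ := hsub (mem_insert _ _)
    have hvF : v ∈ F := hVF hvV
    have hCB : comp M F v ∈ B := hB.2.1 _ ((comp_isPart hFE hvF).flat hM hFflat)
      ⟨v, mem_comp_self hvF⟩ (comp_connected hM hFflat hvF)
    have hsubs : s ⊆ (comp M F) '' V := fun S hS => hsub (mem_insert_of_mem _ hS)
    have hPrev := ih hsubs
    have hsE : V ∪ ⋃₀ s ⊆ M.E := by
      refine union_subset (hVflat.subset_ground) ?_
      intro x hx
      obtain ⟨S, hS, hxS⟩ := hx
      obtain ⟨u, huV, rfl⟩ := hsubs hS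
      exact hFE ((comp_isPart hFE (hVF huV)).1 hxS)
    have hvmem : v ∈ M.closure (V ∪ ⋃₀ s) ∩ comp M F v :=
      ⟨M.subset_closure _ hsE (Or.inl hvV), mem_comp_self hvF⟩
    have hkey := hB.2.2 _ hPrev _ hCB ⟨v, hvmem⟩
    have heq : M.closure (M.closure (V ∪ ⋃₀ s) ∪ comp M F v)
        = M.closure (V ∪ ⋃₀ (insert (comp M F v) s)) := by
      rw [Matroid.closure_union_closure_left_eq, sUnion_insert, union_assoc,
        union_comm (⋃₀ s)]
    rwa [heq] at hkey
  have hUYB : UY ∈ B := by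
    have := hjoin Y hYB hYflat hYF ((comp M F) '' Y) Subset.rfl
    rwa [← hUYdef, union_eq_self_of_subset_left hYUY, hUYflat.closure] at this
  have hUWB : UW ∈ B := by
    have := hjoin W hWB hWflat hWF ((comp M F) '' W) Subset.rfl
    rwa [← hUWdef, union_eq_self_of_subset_left hWUW, hUWflat.closure] at this
  have hclU : M.closure (UY ∪ UW) = F := by
    apply subset_antisymm
    · have := M.closure_subset_closure (union_subset hUYpart.1 hUWpart.1)
      rwa [hFflat.closure] at this
    · exact M.closure_subset_closure (union_subset_union hYUY hWUW)
  have hdisjYW : Disjoint UY UW := by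
    rw [Set.disjoint_iff_inter_eq_empty]
    by_contra hne2
    obtain ⟨x, hx⟩ := nonempty_iff_ne_empty.2 hne2
    have := hB.2.2 UY hUYB UW hUWB ⟨x, hx⟩
    rw [hclU] at this
    exact hFnotB this
  have hUWsub : UW ⊆ F \ UY := subset_diff.2 ⟨hUWpart.1, hdisjYW.symm⟩
  have hskew : mrank M (UY ∪ UW) = mrank M UY + mrank M UW := hUYpart.skew hFE hUWsub
  have hrUF : mrank M (UY ∪ UW) = mrank M F := by
    have := mrank_closure_eq M (UY ∪ UW)
    rw [hclU] at this
    omega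
  have hUpart : IsPart M F (UY ∪ UW) := hUYpart.union hFE hUWpart
  have hdiff0 : mrank M (F \ (UY ∪ UW)) = 0 := by
    have := hUpart.2
    omega
  have hFeq : F = UY ∪ UW :=
    subset_antisymm (diff_eq_empty.mp (eq_empty_of_mrank_zero hM (diff_subset.trans hFE) hdiff0))
      hUpart.1
  have hrY : mrank M Y ≤ mrank M UY := mrank_mono M hYUY
  have hrW : mrank M W ≤ mrank M UW := mrank_mono M hWUW
  have hFYW : mrank M F = mrank M (Y ∪ W) := mrank_closure_eq M (Y ∪ W)
  have hYWle : mrank M (Y ∪ W) ≤ mrank M Y + mrank M W := mrank_union_le M _ _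
  have hYeq : Y = UY := flat_eq_of_subset_of_mrank_le hYflat hUYflat hYUY (by omega)
  have hWeq : W = UW := flat_eq_of_subset_of_mrank_le hWflat hUWflat hWUW (by omega)
  constructor
  · rw [hFeq, ← hYeq, ← hWeq]
  · omega

end Nested

section Atoms

variable {α : Type*} [Fintype α] {M : Matroid α} {A F P Q Z : Set α} {e : α} {B : Set (Set α)}

lemma IsAtomFlat.nonempty (hA : IsAtomFlat M A) : A.Nonempty :=
  nonempty_of_mrank_pos (le_of_eq hA.2.symm)

lemma mrank_singleton (hM : MLoopless M) (he : e ∈ M.E) : mrank M ({e} : Set α) = 1 :=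
  le_antisymm (by simpa using mrank_le_ncard M ({e} : Set α)) (one_le_mrank hM rfl he)

lemma mrank_restrict {R X : Set α} (hX : X ⊆ R) : mrank (M ↾ R) X = mrank M X :=
  mrank_congr_indep fun I hI => by
    rw [Matroid.restrict_indep_iff]; exact ⟨fun h => h.1, fun h => ⟨h, hI.trans hX⟩⟩

lemma atom_mem_buildingSet (hM : MLoopless M) (hB : IsBuildingSet M B)
    (hA : IsAtomFlat M A) : A ∈ B := by
  refine hB.2.1 A hA.1 hA.nonempty ?_
  intro U V hUV hd hUne hVne hsum
  rw [Matroid.restrict_ground_eq] at hUV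
  have hUA : U ⊆ A := hUV ▸ subset_union_left
  have hVA : V ⊆ A := hUV ▸ subset_union_right
  rw [Matroid.restrict_ground_eq, mrank_restrict hUA, mrank_restrict hVA,
    mrank_restrict Subset.rfl] at hsum
  obtain ⟨u, hu⟩ := hUne
  obtain ⟨v, hv⟩ := hVne
  have h1 := one_le_mrank hM hu (hA.1.subset_ground (hUA hu))
  have h2 := one_le_mrank hM hv (hA.1.subset_ground (hVA hv))
  rw [hA.2] at hsum
  omega

lemma closure_singleton_atom (hM : MLoopless M) (he : e ∈ M.E) :
    IsAtomFlat M (M.closure {e}) :=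
  ⟨closure_flat' M _, by rw [mrank_closure_eq, mrank_singleton hM he]⟩

lemma atom_proper_flat_empty (hM : MLoopless M) (hA : IsAtomFlat M A) (hF : M.IsFlat F)
    (hFA : F ⊆ A) (hne : F ≠ A) : F = ∅ := by
  have h0 : mrank M F = 0 := by
    by_contra h
    have h1 : mrank M A ≤ mrank M F := by rw [hA.2]; omega
    exact hne (flat_eq_of_subset_of_mrank_le hF hA.1 hFA h1)
  exact eq_empty_of_mrank_zero hM (hFA.trans hA.1.subset_ground) h0

lemma atom_eq_closure_singleton (hM : MLoopless M) (hA : IsAtomFlat M A) (he : e ∈ A) :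
    A = M.closure {e} := by
  have hsub : M.closure {e} ⊆ A := by
    have := M.closure_subset_closure (singleton_subset_iff.2 he)
    rwa [hA.1.closure] at this
  have heE : e ∈ M.E := hA.1.subset_ground he
  exact (flat_eq_of_subset_of_mrank_le (closure_singleton_atom hM heE).1 hA.1 hsub
    (by rw [hA.2, (closure_singleton_atom hM heE).2])).symm

lemma atom_subset_or (hM : MLoopless M) (hA : IsAtomFlat M A) (hP : M.IsFlat P)
    (hQ : M.IsFlat Q) (h : A ⊆ P ∪ Q) : A ⊆ P ∨ A ⊆ Q := by
  by_cases hAP : A ∩ P = A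
  · exact Or.inl (by rw [← hAP]; exact inter_subset_right)
  by_cases hAQ : A ∩ Q = A
  · exact Or.inr (by rw [← hAQ]; exact inter_subset_right)
  have h1 : A ∩ P = ∅ := atom_proper_flat_empty hM hA (flat_inter hA.1 hP) inter_subset_left hAP
  have h2 : A ∩ Q = ∅ := atom_proper_flat_empty hM hA (flat_inter hA.1 hQ) inter_subset_left hAQ
  obtain ⟨a, ha⟩ := hA.nonempty
  rcases h ha with h' | h'
  · exact (Set.eq_empty_iff_forall_notMem.mp h1 a ⟨ha, h'⟩).elim
  · exact (Set.eq_empty_iff_forall_notMem.mp h2 a ⟨ha, h'⟩).elim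

lemma atom_inter_flat_empty (hM : MLoopless M) (hA : IsAtomFlat M A) (hZ : M.IsFlat Z)
    (h : ¬ A ⊆ Z) : A ∩ Z = ∅ :=
  atom_proper_flat_empty hM hA (flat_inter hA.1 hZ) inter_subset_left
    (fun heq => h (by rw [← heq]; exact inter_subset_right))

end Atoms

section RestrictMore

variable {α : Type*} [Fintype α] {M : Matroid α} {Z S G : Set α}

lemma restrict_loopless (hM : MLoopless M) (hZE : Z ⊆ M.E) : MLoopless (M ↾ Z) := by
  intro e he
  rw [Matroid.restrict_ground_eq] at he
  rw [Matroid.restrict_indep_iff]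
  exact ⟨hM e (hZE he), singleton_subset_iff.2 he⟩

lemma restrict_closure_eq' (hS : S ⊆ Z) (hZE : Z ⊆ M.E) :
    (M ↾ Z).closure S = M.closure S ∩ Z := by
  obtain ⟨I, hI⟩ := (M ↾ Z).exists_isBasis S (by rwa [Matroid.restrict_ground_eq])
  have hIM : M.IsBasis I S := ((Matroid.isBasis_restrict_iff hZE).mp hI).1
  ext x
  rw [← hI.closure_eq_closure, ← hIM.closure_eq_closure, mem_inter_iff,
    hI.indep.mem_closure_iff', hIM.indep.mem_closure_iff', Matroid.restrict_ground_eq,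
    Matroid.restrict_indep_iff]
  have hIZ : I ⊆ Z := hI.subset.trans hS
  constructor
  · rintro ⟨hxZ, himp⟩
    exact ⟨⟨hZE hxZ, fun hind => himp ⟨hind, insert_subset hxZ hIZ⟩⟩, hxZ⟩
  · rintro ⟨⟨hxE, himp⟩, hxZ⟩
    exact ⟨hxZ, fun hind => himp hind.1⟩

lemma flat_restrict_of_flat (hF : M.IsFlat G) (hGZ : G ⊆ Z) (hZE : Z ⊆ M.E) :
    (M ↾ Z).IsFlat G := by
  refine flat_of_closure_eq ?_
  rw [restrict_closure_eq' hGZ hZE, hF.closure]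
  exact inter_eq_self_of_subset_left hGZ

lemma flat_of_flat_restrict (hG : (M ↾ Z).IsFlat G) (hZflat : M.IsFlat Z) : M.IsFlat G := by
  have hGZ : G ⊆ Z := by have := hG.subset_ground; rwa [Matroid.restrict_ground_eq] at this
  have h1 : M.closure G ∩ Z = G := by
    rw [← restrict_closure_eq' hGZ hZflat.subset_ground, hG.closure]
  have h2 : M.closure G ⊆ Z := by
    have := M.closure_subset_closure hGZ
    rwa [hZflat.closure] at this
  refine flat_of_closure_eq ?_
  calc M.closure G = M.closure G ∩ Z := (inter_eq_self_of_subset_left h2).symm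
  _ = G := h1

end RestrictMore

section Contract

variable {α : Type*} [Fintype α] {M MZ : Matroid α} {Z S I J : Set α}

lemma contract_indep_iff' (hMZ : IsContraction M MZ Z) (hZE : Z ⊆ M.E) (hJ : M.IsBasis J Z)
    {I : Set α} : MZ.Indep I ↔ I ⊆ M.E \ Z ∧ M.Indep (I ∪ J) := by
  rw [hMZ.2]
  constructor
  · rintro ⟨hIE, J', hJ', hIJ'⟩
    refine ⟨hIE, ?_⟩
    have hIZ : Disjoint I Z := (subset_diff.mp hIE).2
    obtain ⟨K, hK, hJK⟩ := hJ.indep.subset_isBasis_of_subset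
      (hJ.subset.trans subset_union_right : J ⊆ I ∪ Z)
      (union_subset (hIE.trans diff_subset) hZE)
    have hKZ : J = K ∩ Z :=
      hJ.eq_of_subset_indep (hK.indep.subset inter_subset_left)
        (subset_inter hJK hJ.subset) inter_subset_right
    have hJJ' : J'.ncard = J.ncard := by
      have := hJ'.encard_eq_encard hJ
      simp only [Set.ncard_def, this]
    have hIJ'd : Disjoint I J' := hIZ.mono_right hJ'.subset
    have h1 : I.ncard + J.ncard ≤ K.ncard := by
      have h := indep_ncard_le_mrank hIJ'
        (union_subset subset_union_left (hJ'.subset.trans subset_union_right))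
      rw [basis_mrank_eq hK, Set.ncard_union_eq hIJ'd I.toFinite J'.toFinite, hJJ'] at h
      exact h
    have hKsplit : (K \ Z).ncard + J.ncard = K.ncard := by
      have hd : Disjoint (K \ Z) (K ∩ Z) := disjoint_sdiff_left.mono_right inter_subset_right
      have hu : (K \ Z) ∪ (K ∩ Z) = K := by rw [diff_union_inter]
      rw [hKZ, ← Set.ncard_union_eq hd (toFinite _) (toFinite _), hu]
    have hKZI : K \ Z ⊆ I := by
      intro x hx
      rcases hK.subset hx.1 with h | h
      · exact h
      · exact absurd h hx.2
    have hKI : K \ Z = I := Set.eq_of_subset_of_ncard_le hKZI (by omega) I.toFinite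
    refine hK.indep.subset (union_subset ?_ hJK)
    rw [← hKI]
    exact diff_subset
  · rintro ⟨hIE, hIJ⟩
    exact ⟨hIE, J, hJ, hIJ⟩

lemma contract_loopless (hMZ : IsContraction M MZ Z) (hZflat : M.IsFlat Z)
    (hJ : M.IsBasis J Z) : MLoopless MZ := by
  intro e he
  rw [hMZ.1] at he
  rw [contract_indep_iff' hMZ hZflat.subset_ground hJ]
  refine ⟨singleton_subset_iff.2 he, ?_⟩
  have heJ : e ∉ J := fun h => he.2 (hJ.subset h)
  rw [singleton_union, hJ.indep.insert_indep_iff_of_notMem heJ]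
  refine ⟨he.1, ?_⟩
  rw [hJ.closure_eq_closure, hZflat.closure]
  exact he.2

lemma contract_basis_union (hMZ : IsContraction M MZ Z) (hZE : Z ⊆ M.E) (hJ : M.IsBasis J Z)
    (hS : S ⊆ M.E \ Z) (hI : MZ.IsBasis I S) : M.IsBasis (I ∪ J) (S ∪ Z) := by
  obtain ⟨hIE, hIJ⟩ := (contract_indep_iff' hMZ hZE hJ).mp hI.indep
  refine hIJ.isBasis_of_forall_insert (union_subset_union hI.subset hJ.subset) ?_
  rintro x ⟨hxSZ, hxIJ⟩
  have hxE : x ∈ M.E := by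
    rcases hxSZ with h | h
    · exact (hS h).1
    · exact hZE h
  rw [Matroid.dep_iff]
  refine ⟨fun hind => ?_, insert_subset hxE hIJ.subset_ground⟩
  have hxcl := ((hIJ.insert_indep_iff_of_notMem hxIJ).mp hind).2
  have hxZ : x ∉ Z := by
    intro hxZ
    apply hxcl
    have hZcl : Z ⊆ M.closure (I ∪ J) := by
      have h1 : Z ⊆ M.closure J := by
        rw [hJ.closure_eq_closure]
        exact M.subset_closure Z hZE
      exact h1.trans (M.closure_subset_closure subset_union_right)
    exact hZcl hxZ
  have hxS : x ∈ S := hxSZ.resolve_right hxZ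
  have hxIndep : MZ.Indep (insert x I) := by
    rw [contract_indep_iff' hMZ hZE hJ]
    refine ⟨insert_subset ⟨hxE, hxZ⟩ hIE, ?_⟩
    rwa [insert_union]
  exact (hI.insert_dep ⟨hxS, fun h => hxIJ (Or.inl h)⟩).not_indep hxIndep

lemma contract_closure_eq' (hMZ : IsContraction M MZ Z) (hZE : Z ⊆ M.E) (hJ : M.IsBasis J Z)
    (hS : S ⊆ M.E \ Z) : MZ.closure S = M.closure (S ∪ Z) \ Z := by
  obtain ⟨I, hI⟩ := MZ.exists_isBasis S (by rw [hMZ.1]; exact hS)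
  have hbig := contract_basis_union hMZ hZE hJ hS hI
  obtain ⟨hIE, hIJ⟩ := (contract_indep_iff' hMZ hZE hJ).mp hI.indep
  ext x
  rw [← hI.closure_eq_closure, mem_diff, ← hbig.closure_eq_closure,
    hI.indep.mem_closure_iff', hIJ.mem_closure_iff', hMZ.1]
  constructor
  · rintro ⟨⟨hxE, hxZ⟩, himp⟩
    refine ⟨⟨hxE, fun hind => ?_⟩, hxZ⟩
    have hxi : MZ.Indep (insert x I) := by
      rw [contract_indep_iff' hMZ hZE hJ]
      exact ⟨insert_subset ⟨hxE, hxZ⟩ hIE, by rwa [insert_union]⟩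
    exact Or.inl (himp hxi)
  · rintro ⟨⟨hxE, himp⟩, hxZ⟩
    refine ⟨⟨hxE, hxZ⟩, fun hind => ?_⟩
    obtain ⟨-, hu⟩ := (contract_indep_iff' hMZ hZE hJ).mp hind
    rw [insert_union] at hu
    rcases himp hu with h | h
    · exact h
    · exact absurd (hJ.subset h) hxZ

lemma contract_mrank (hMZ : IsContraction M MZ Z) (hZE : Z ⊆ M.E) (hJ : M.IsBasis J Z)
    (hS : S ⊆ M.E \ Z) : mrank MZ S + mrank M Z = mrank M (S ∪ Z) := by
  obtain ⟨I, hI⟩ := MZ.exists_isBasis S (by rw [hMZ.1]; exact hS)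
  have hbig := contract_basis_union hMZ hZE hJ hS hI
  obtain ⟨hIE, -⟩ := (contract_indep_iff' hMZ hZE hJ).mp hI.indep
  have hd : Disjoint I J := ((subset_diff.mp hIE).2).mono_right hJ.subset
  rw [basis_mrank_eq hI, basis_mrank_eq hJ, basis_mrank_eq hbig,
    Set.ncard_union_eq hd I.toFinite J.toFinite]

end Contract

section Sum

variable {α : Type*} [Fintype α] {M MZ : Matroid α} {Z S I J F : Set α}
  {hdisj : Disjoint (M.restrict Z).E MZ.E}

lemma sum_ground (hMZ : IsContraction M MZ Z) (hZE : Z ⊆ M.E) :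
    (Matroid.disjointSum (M.restrict Z) MZ hdisj).E = M.E := by
  rw [Matroid.disjointSum_ground_eq, Matroid.restrict_ground_eq, hMZ.1, union_diff_cancel hZE]

lemma sum_indep_iff (hMZ : IsContraction M MZ Z) (hZE : Z ⊆ M.E) {I : Set α} :
    (Matroid.disjointSum (M.restrict Z) MZ hdisj).Indep I ↔
      (M ↾ Z).Indep (I ∩ Z) ∧ MZ.Indep (I ∩ (M.E \ Z)) ∧ I ⊆ M.E := by
  rw [Matroid.disjointSum_indep_iff, Matroid.restrict_ground_eq, hMZ.1, union_diff_cancel hZE]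

lemma sum_mrank_left (hMZ : IsContraction M MZ Z) (hZE : Z ⊆ M.E) (hJ : M.IsBasis J Z)
    (hS : S ⊆ Z) :
    mrank (Matroid.disjointSum (M.restrict Z) MZ hdisj) S = mrank M S := by
  refine mrank_congr_indep fun I hI => ?_
  have hIZ : I ⊆ Z := hI.trans hS
  rw [sum_indep_iff hMZ hZE]
  have h1 : I ∩ Z = I := inter_eq_self_of_subset_left hIZ
  have h2 : I ∩ (M.E \ Z) = ∅ :=
    eq_empty_iff_forall_notMem.2 fun x hx => hx.2.2 (hIZ hx.1)
  have hMZempty : MZ.Indep ∅ := by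
    rw [contract_indep_iff' hMZ hZE hJ]
    exact ⟨empty_subset _, by rw [empty_union]; exact hJ.indep⟩
  rw [h1, h2, Matroid.restrict_indep_iff]
  constructor
  · rintro ⟨⟨h, -⟩, -, -⟩; exact h
  · intro h; exact ⟨⟨h, hIZ⟩, hMZempty, hIZ.trans hZE⟩

lemma sum_mrank_right (hMZ : IsContraction M MZ Z) (hZE : Z ⊆ M.E)
    (hS : S ⊆ M.E \ Z) :
    mrank (Matroid.disjointSum (M.restrict Z) MZ hdisj) S = mrank MZ S := by
  refine mrank_congr_indep fun I hI => ?_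
  have hIE : I ⊆ M.E \ Z := hI.trans hS
  rw [sum_indep_iff hMZ hZE]
  have h1 : I ∩ Z = ∅ :=
    eq_empty_iff_forall_notMem.2 fun x hx => (hIE hx.1).2 hx.2
  have h2 : I ∩ (M.E \ Z) = I := inter_eq_self_of_subset_left hIE
  rw [h1, h2]
  constructor
  · rintro ⟨-, h, -⟩; exact h
  · intro h
    exact ⟨by rw [Matroid.restrict_indep_iff]; exact ⟨M.empty_indep, empty_subset _⟩,
      h, hIE.trans diff_subset⟩

lemma sum_closure_eq (hMZ : IsContraction M MZ Z) (hZE : Z ⊆ M.E) (hJ : M.IsBasis J Z)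
    (hS : S ⊆ M.E) :
    (Matroid.disjointSum (M.restrict Z) MZ hdisj).closure S =
      (M ↾ Z).closure (S ∩ Z) ∪ MZ.closure (S \ Z) := by
  set M' := Matroid.disjointSum (M.restrict Z) MZ hdisj with hM'def
  obtain ⟨I₁, hI₁⟩ := (M ↾ Z).exists_isBasis (S ∩ Z)
    (by rw [Matroid.restrict_ground_eq]; exact inter_subset_right)
  obtain ⟨I₂, hI₂⟩ := MZ.exists_isBasis (S \ Z)
    (by rw [hMZ.1]; exact diff_subset_diff_left hS)
  have hI1Z : I₁ ⊆ Z := hI₁.subset.trans inter_subset_right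
  have hI2E : I₂ ⊆ M.E \ Z := by
    have := hI₂.indep.subset_ground
    rwa [hMZ.1] at this
  have hd21 : Disjoint I₂ Z := (subset_diff.mp hI2E).2
  have hd1 : Disjoint I₁ (M.E \ Z) := Set.disjoint_left.mpr fun {a} ha hb => hb.2 (hI1Z ha)
  have hc1 : (I₁ ∪ I₂) ∩ Z = I₁ := by
    rw [union_inter_distrib_right, inter_eq_self_of_subset_left hI1Z, hd21.inter_eq,
      union_empty]
  have hc2 : (I₁ ∪ I₂) ∩ (M.E \ Z) = I₂ := by
    rw [union_inter_distrib_right, hd1.inter_eq, inter_eq_self_of_subset_left hI2E,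
      empty_union]
  have hUE : I₁ ∪ I₂ ⊆ M.E := union_subset (hI1Z.trans hZE) (hI2E.trans diff_subset)
  have huIndep : M'.Indep (I₁ ∪ I₂) := by
    rw [hM'def, sum_indep_iff hMZ hZE, hc1, hc2]
    exact ⟨hI₁.indep, hI₂.indep, hUE⟩
  have hbasis : M'.IsBasis (I₁ ∪ I₂) S := by
    refine huIndep.isBasis_of_forall_insert
      (union_subset (hI₁.subset.trans inter_subset_left) (hI₂.subset.trans diff_subset)) ?_
    rintro x ⟨hxS, hxI⟩
    rw [Matroid.dep_iff]
    refine ⟨fun hind => ?_, insert_subset (by rw [hM'def, sum_ground hMZ hZE]; exact hS hxS)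
      huIndep.subset_ground⟩
    rw [hM'def, sum_indep_iff hMZ hZE] at hind
    by_cases hxZ : x ∈ Z
    · rw [Set.insert_inter_of_mem hxZ, hc1] at hind
      exact (hI₁.insert_dep ⟨⟨hxS, hxZ⟩, fun h => hxI (Or.inl h)⟩).not_indep hind.1
    · have hxE' : x ∈ M.E \ Z := ⟨hS hxS, hxZ⟩
      rw [Set.insert_inter_of_notMem hxZ, hc1,
        Set.insert_inter_of_mem hxE', hc2] at hind
      exact (hI₂.insert_dep ⟨⟨hxS, hxZ⟩, fun h => hxI (Or.inr h)⟩).not_indep hind.2.1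
  ext x
  rw [← hbasis.closure_eq_closure, ← hI₁.closure_eq_closure, ← hI₂.closure_eq_closure,
    mem_union, huIndep.mem_closure_iff', hI₁.indep.mem_closure_iff',
    hI₂.indep.mem_closure_iff', Matroid.restrict_ground_eq, hM'def, sum_ground hMZ hZE,
    hMZ.1]
  constructor
  · rintro ⟨hxE, himp⟩
    by_cases hxZ : x ∈ Z
    · refine Or.inl ⟨hxZ, fun hind₁ => ?_⟩
      have hind : M'.Indep (insert x (I₁ ∪ I₂)) := by
        rw [hM'def, sum_indep_iff hMZ hZE, Set.insert_inter_of_mem hxZ, hc1,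
          Set.insert_inter_of_notMem (fun h => h.2 hxZ), hc2]
        exact ⟨hind₁, hI₂.indep, insert_subset hxE hUE⟩
      rcases himp hind with h | h
      · exact h
      · exact absurd rfl (hd21.ne_of_mem h hxZ)
    · refine Or.inr ⟨⟨hxE, hxZ⟩, fun hind₂ => ?_⟩
      have hxD : x ∈ M.E \ Z := ⟨hxE, hxZ⟩
      have hind : M'.Indep (insert x (I₁ ∪ I₂)) := by
        rw [hM'def, sum_indep_iff hMZ hZE, Set.insert_inter_of_notMem hxZ, hc1,
          Set.insert_inter_of_mem hxD, hc2]
        exact ⟨hI₁.indep, hind₂, insert_subset hxE hUE⟩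
      rcases himp hind with h | h
      · exact absurd (hI1Z h) hxZ
      · exact h
  · rintro (⟨hxZ, himp⟩ | ⟨hxE', himp⟩)
    · refine ⟨hZE hxZ, fun hind => ?_⟩
      rw [sum_indep_iff hMZ hZE, Set.insert_inter_of_mem hxZ, hc1] at hind
      exact Or.inl (himp hind.1)
    · refine ⟨hxE'.1, fun hind => ?_⟩
      rw [sum_indep_iff hMZ hZE, Set.insert_inter_of_mem hxE', hc2] at hind
      exact Or.inr (himp hind.2.1)

lemma sum_flat_iff (hMZ : IsContraction M MZ Z) (hZE : Z ⊆ M.E) (hJ : M.IsBasis J Z)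
    (hF : F ⊆ M.E) :
    (Matroid.disjointSum (M.restrict Z) MZ hdisj).IsFlat F ↔
      (M ↾ Z).IsFlat (F ∩ Z) ∧ MZ.IsFlat (F \ Z) := by
  have hcl1Z : (M ↾ Z).closure (F ∩ Z) ⊆ Z := by
    have := (M ↾ Z).closure_subset_ground (F ∩ Z)
    rwa [Matroid.restrict_ground_eq] at this
  have hcl2E : MZ.closure (F \ Z) ⊆ M.E \ Z := by
    have := MZ.closure_subset_ground (F \ Z)
    rwa [hMZ.1] at this
  constructor
  · intro h
    have hcl := h.closure
    rw [sum_closure_eq hMZ hZE hJ hF] at hcl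
    have h2Z : MZ.closure (F \ Z) ∩ Z = ∅ :=
      eq_empty_iff_forall_notMem.2 fun x hx => (hcl2E hx.1).2 hx.2
    have h1Z : (M ↾ Z).closure (F ∩ Z) \ Z = ∅ :=
      eq_empty_iff_forall_notMem.2 fun x hx => hx.2 (hcl1Z hx.1)
    constructor
    · refine flat_of_closure_eq ?_
      have e1 : F ∩ Z = (M ↾ Z).closure (F ∩ Z) := by
        conv_lhs => rw [← hcl]
        rw [union_inter_distrib_right, inter_eq_self_of_subset_left hcl1Z, h2Z, union_empty]
      exact e1.symm
    · refine flat_of_closure_eq ?_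
      have h2d : MZ.closure (F \ Z) \ Z = MZ.closure (F \ Z) :=
        subset_antisymm diff_subset (fun x hx => ⟨hx, (hcl2E hx).2⟩)
      have e2 : F \ Z = MZ.closure (F \ Z) := by
        conv_lhs => rw [← hcl]
        rw [union_diff_distrib, h1Z, empty_union, h2d]
      exact e2.symm
  · rintro ⟨h1, h2⟩
    refine flat_of_closure_eq ?_
    rw [sum_closure_eq hMZ hZE hJ hF, h1.closure, h2.closure, inter_union_diff]

end Sum

section MainAux

variable {α : Type*} [Fintype α] {M : Matroid α}

lemma loopless_closure_empty (hM : MLoopless M) : M.closure (∅ : Set α) = ∅ := by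
  ext e
  simp only [mem_empty_iff_false, iff_false]
  intro he
  have heE : e ∈ M.E := M.mem_ground_of_mem_closure he
  rw [M.empty_indep.mem_closure_iff'] at he
  exact he.2 (by simpa using hM e heE)

end MainAux

/-- the label of `τ_Z(X)` in `τ_Z(N)`, computed in the direct sum of
`M|Z` and `M/Z`, is `m_N(X)` if `X ⊆ Z` and `(m_N(X) ∨ Z) ∖ Z` otherwise. -/
theorem label_of_tau {α : Type*} [Fintype α] [LinearOrder α]
    (M MZ : Matroid α) (hM : MLoopless M)
    (B : Set (Set α)) (hB : IsBuildingSet M B)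
    (N : Set (Set α)) (hN : IsNested M B N)
    (Z : Set α) (hZ : Z ∈ N) (hZm : Z ∉ maxB B)
    (X : Set α) (hX : X ∈ N) (hXZ : X ≠ Z)
    (hMZ : IsContraction M MZ Z)
    (hdisj : Disjoint (M.restrict Z).E MZ.E)
    (A : Set α) (hA : IsMinLabel M N X A) :
    (X ⊆ Z → IsMinLabel (Matroid.disjointSum (M.restrict Z) MZ hdisj)
        (tau M Z '' N) (tau M Z X) A) ∧
    (¬ X ⊆ Z → IsMinLabel (Matroid.disjointSum (M.restrict Z) MZ hdisj)
        (tau M Z '' N) (tau M Z X) (M.closure (A ∪ Z) \ Z)) := by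
  obtain ⟨hNB, hNmax, hNjoin⟩ := hN
  have hN' : IsNested M B N := ⟨hNB, hNmax, hNjoin⟩
  have hZB := hNB hZ
  obtain ⟨hZflat, hZne⟩ := hB.1 Z hZB
  have hZE : Z ⊆ M.E := hZflat.subset_ground
  have hXB := hNB hX
  obtain ⟨hXflat, hXne⟩ := hB.1 X hXB
  have hXE : X ⊆ M.E := hXflat.subset_ground
  obtain ⟨J, hJ⟩ := M.exists_isBasis Z hZE
  obtain ⟨⟨hAatom, hAX, hAgood⟩, hAmin⟩ := hA
  have hAne : A.Nonempty := hAatom.nonempty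
  have hAE : A ⊆ M.E := hAatom.1.subset_ground
  have hMZloop : MLoopless MZ := contract_loopless hMZ hZflat hJ
  constructor
  · -- Case X ⊆ Z
    intro hXsub
    have htX : tau M Z X = X := if_pos hXsub
    rw [htX]
    have hAZ : A ⊆ Z := hAX.trans hXsub
    refine ⟨⟨⟨?_, ?_⟩, hAX, ?_⟩, ?_⟩
    · rw [sum_flat_iff hMZ hZE hJ hAE]
      constructor
      · rw [inter_eq_self_of_subset_left hAZ]
        exact flat_restrict_of_flat hAatom.1 hAZ hZE
      · rw [diff_eq_empty.mpr hAZ]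
        refine flat_of_closure_eq ?_
        rw [contract_closure_eq' hMZ hZE hJ (empty_subset _), empty_union, hZflat.closure,
          diff_self]
    · rw [sum_mrank_left hMZ hZE hJ hAZ]
      exact hAatom.2
    · rintro Y' ⟨Y, hYN, rfl⟩ hYsub
      by_cases hYZ : Y ⊆ Z
      · have htY : tau M Z Y = Y := if_pos hYZ
        rw [htY] at hYsub ⊢
        exact hAgood Y hYN hYsub
      · exfalso
        have htY : tau M Z Y = M.closure (Y ∪ Z) \ Z := if_neg hYZ
        obtain ⟨y, hyY, hyZ⟩ := not_subset.mp hYZ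
        have hYE : Y ⊆ M.E := (hB.1 Y (hNB hYN)).1.subset_ground
        have hy : y ∈ tau M Z Y := by
          rw [htY]
          exact ⟨M.subset_closure _ (union_subset hYE hZE) (Or.inl hyY), hyZ⟩
        exact hyZ (hXsub (hYsub.subset hy))
    · rintro A' ⟨hA'atom, hA'X, hA'good⟩
      have hA'Z : A' ⊆ Z := hA'X.trans hXsub
      have hA'E : A' ⊆ M.E := by
        have := hA'atom.1.subset_ground
        rwa [sum_ground hMZ hZE] at this
      have hflats := (sum_flat_iff hMZ hZE hJ hA'E).mp hA'atom.1
      have hA'flatM : M.IsFlat A' := by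
        have h1 := hflats.1
        rw [inter_eq_self_of_subset_left hA'Z] at h1
        exact flat_of_flat_restrict h1 hZflat
      have hA'rank : mrank M A' = 1 := by
        have := hA'atom.2
        rwa [sum_mrank_left hMZ hZE hJ hA'Z] at this
      refine hAmin A' ⟨⟨hA'flatM, hA'rank⟩, hA'X, ?_⟩
      intro Y hYN hYX
      have hYZ : Y ⊆ Z := hYX.subset.trans hXsub
      have htY : tau M Z Y = Y := if_pos hYZ
      have := hA'good (tau M Z Y) ⟨Y, hYN, rfl⟩
      rw [htY] at this
      exact this hYX
  · -- Case ¬ X ⊆ Z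
    intro hXnsub
    have htauX : tau M Z X = M.closure (X ∪ Z) \ Z := if_neg hXnsub
    have hAZdisj : A ∩ Z = ∅ := by
      rcases nested_trichotomy hB hN' hZ hX with hZX | hXZ' | hdisjZX
      · have hZssX : Z ⊂ X := ssubset_iff_subset_ne.mpr ⟨hZX, fun h => hXZ h.symm⟩
        exact atom_inter_flat_empty hM hAatom hZflat (hAgood Z hZ hZssX)
      · exact absurd hXZ' hXnsub
      · exact eq_empty_iff_forall_notMem.2 fun a ha =>
          (eq_empty_iff_forall_notMem.mp hdisjZX a) ⟨ha.2, hAX ha.1⟩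
    have hAD : Disjoint A Z := Set.disjoint_iff_inter_eq_empty.mpr hAZdisj
    have hAE' : A ⊆ M.E \ Z := subset_diff.2 ⟨hAE, hAD⟩
    have hAZE : A ∪ Z ⊆ M.E := union_subset hAE hZE
    have hAstarE : M.closure (A ∪ Z) \ Z ⊆ M.E \ Z := fun x hx =>
      ⟨M.closure_subset_ground _ hx.1, hx.2⟩
    have hAAstar : A ⊆ M.closure (A ∪ Z) \ Z := fun a ha =>
      ⟨M.subset_closure _ hAZE (Or.inl ha), fun hZa => hAD.ne_of_mem ha hZa rfl⟩
    have hAstar_ne : (M.closure (A ∪ Z) \ Z).Nonempty := hAne.mono hAAstar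
    have hrAZ : mrank M (A ∪ Z) = mrank M Z + 1 := by
      refine le_antisymm ?_ ?_
      · have h1 := mrank_union_le M A Z
        rw [hAatom.2] at h1
        omega
      · obtain ⟨a, ha⟩ := hAne
        have haZ : a ∉ M.closure Z := by
          rw [hZflat.closure]
          exact fun h => hAD.ne_of_mem ha h rfl
        have h2 : mrank M (insert a Z) = mrank M Z + 1 :=
          mrank_insert_of_not_mem_closure (hAE ha) haZ
        have h3 : insert a Z ⊆ A ∪ Z := insert_subset (Or.inl ha) subset_union_right
        have := mrank_mono M h3
        omega
    have hZclAZ : Z ⊆ M.closure (A ∪ Z) :=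
      (subset_union_right).trans (M.subset_closure (A ∪ Z) hAZE)
    have hclAstar : M.closure ((M.closure (A ∪ Z) \ Z) ∪ Z) = M.closure (A ∪ Z) := by
      apply subset_antisymm
      · exact Matroid.closure_subset_closure_of_subset_closure
          (union_subset diff_subset hZclAZ)
      · exact M.closure_subset_closure (union_subset_union_left Z hAAstar)
    have hMZflat_Astar : MZ.IsFlat (M.closure (A ∪ Z) \ Z) := by
      refine flat_of_closure_eq ?_
      rw [contract_closure_eq' hMZ hZE hJ hAstarE, hclAstar]
    have hMZrank_Astar : mrank MZ (M.closure (A ∪ Z) \ Z) = 1 := by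
      have h1 := contract_mrank hMZ hZE hJ hAstarE
      have h2 : mrank M ((M.closure (A ∪ Z) \ Z) ∪ Z) = mrank M (A ∪ Z) := by
        rw [← mrank_closure_eq M ((M.closure (A ∪ Z) \ Z) ∪ Z), hclAstar, mrank_closure_eq]
      omega
    have htauXsubX : tau M Z X ⊆ X := by
      rcases nested_trichotomy hB hN' hZ hX with hZX | hXZ' | hdisjZX
      · rw [htauX, union_eq_self_of_subset_right hZX, hXflat.closure]
        exact diff_subset
      · exact absurd hXZ' hXnsub
      · have hZY' : ¬ Z ⊆ X := fun h => by
          obtain ⟨z, hz⟩ := hZne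
          exact (eq_empty_iff_forall_notMem.mp hdisjZX z) ⟨hz, h hz⟩
        have hNU := nested_union_eq hM hB hN' hX hZ hXnsub hZY'
        rw [htauX, hNU.1, union_diff_right]
        exact diff_subset
    refine ⟨⟨⟨?_, ?_⟩, ?_, ?_⟩, ?_⟩
    · rw [sum_flat_iff hMZ hZE hJ (hAstarE.trans diff_subset)]
      constructor
      · have hint : (M.closure (A ∪ Z) \ Z) ∩ Z = ∅ :=
          eq_empty_iff_forall_notMem.2 fun x hx => hx.1.2 hx.2
        rw [hint]
        refine flat_of_closure_eq ?_
        rw [restrict_closure_eq' (empty_subset Z) hZE, loopless_closure_empty hM, empty_inter]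
      · have hdd : (M.closure (A ∪ Z) \ Z) \ Z = M.closure (A ∪ Z) \ Z := by
          rw [diff_diff, union_self]
        rw [hdd]
        exact hMZflat_Astar
    · rw [sum_mrank_right hMZ hZE hAstarE]
      exact hMZrank_Astar
    · rw [htauX]
      exact diff_subset_diff_left (M.closure_subset_closure (union_subset_union_left Z hAX))
    · rintro Y' ⟨Y, hYN, rfl⟩ hss hcon
      by_cases hYsubZ : Y ⊆ Z
      · have htY : tau M Z Y = Y := if_pos hYsubZ
        obtain ⟨y, hy⟩ := (hB.1 Y (hNB hYN)).2
        have hyX : y ∈ tau M Z X := hss.subset (by rw [htY]; exact hy)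
        rw [htauX] at hyX
        exact hyX.2 (hYsubZ hy)
      · obtain ⟨hYflat, hYne⟩ := hB.1 Y (hNB hYN)
        have hYE := hYflat.subset_ground
        have htY : tau M Z Y = M.closure (Y ∪ Z) \ Z := if_neg hYsubZ
        have hAclY : A ⊆ M.closure (Y ∪ Z) := fun a ha => by
          have h := hcon (hAAstar ha)
          rw [htY] at h
          exact h.1
        have hAY : A ⊆ Y := by
          rcases nested_trichotomy hB hN' hYN hZ with h | hZY | hYZdisj
          · exact absurd h hYsubZ
          · rwa [union_eq_self_of_subset_right hZY, hYflat.closure] at hAclY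
          · have hZY' : ¬ Z ⊆ Y := fun h => by
              obtain ⟨z, hz⟩ := hZne
              exact (eq_empty_iff_forall_notMem.mp hYZdisj z) ⟨h hz, hz⟩
            have hNU := nested_union_eq hM hB hN' hYN hZ hYsubZ hZY'
            rw [hNU.1] at hAclY
            rcases atom_subset_or hM hAatom hYflat hZflat hAclY with h | h
            · exact h
            · obtain ⟨a, ha⟩ := hAne
              exact (hAD.ne_of_mem ha (h ha) rfl).elim
        rcases nested_trichotomy hB hN' hYN hX with hYX | hXY | hdisjYX
        · have hYneX : Y ≠ X := fun h => hss.ne (by rw [h])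
          exact hAgood Y hYN (ssubset_iff_subset_ne.mpr ⟨hYX, hYneX⟩) hAY
        · have hcontra : tau M Z X ⊆ tau M Z Y := by
            rw [htauX, htY]
            exact diff_subset_diff_left
              (M.closure_subset_closure (union_subset_union_left Z hXY))
          exact hss.not_subset hcontra
        · obtain ⟨a, ha⟩ := hAne
          exact (eq_empty_iff_forall_notMem.mp hdisjYX a) ⟨hAY ha, hAX ha⟩
    · rintro A'' ⟨hA''atom, hA''sub, hA''good⟩
      have hA''E' : A'' ⊆ M.E \ Z := by
        intro x hx
        have hx' := hA''sub hx
        rw [htauX] at hx'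
        exact ⟨M.closure_subset_ground _ hx'.1, hx'.2⟩
      have hA''flatMZ : MZ.IsFlat A'' := by
        have hA''E : A'' ⊆ M.E := hA''E'.trans diff_subset
        have h := (sum_flat_iff hMZ hZE hJ hA''E).mp hA''atom.1
        have hdd : A'' \ Z = A'' :=
          subset_antisymm diff_subset (fun x hx => ⟨hx, (hA''E' hx).2⟩)
        rw [hdd] at h
        exact h.2
      have hA''rank : mrank MZ A'' = 1 := by
        have h := hA''atom.2
        rwa [sum_mrank_right hMZ hZE hA''E'] at h
      have hA''ne : A''.Nonempty := nonempty_of_mrank_pos (le_of_eq hA''rank.symm)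
      obtain ⟨d, hd⟩ := exists_isLeast hA''ne
      have hdE : d ∈ M.E \ Z := hA''E' hd.1
      have hdX : d ∈ X := htauXsubX (hA''sub hd.1)
      have hdMZE : d ∈ MZ.E := by rw [hMZ.1]; exact hdE
      have hDatom : IsAtomFlat M (M.closure {d}) := closure_singleton_atom hM hdE.1
      have hdD : d ∈ M.closure {d} := M.mem_closure_self d hdE.1
      have hDX : M.closure {d} ⊆ X := by
        have := M.closure_subset_closure (singleton_subset_iff.2 hdX)
        rwa [hXflat.closure] at this
      have hA''eq : A'' = MZ.closure {d} := by
        have h1 : MZ.closure {d} ⊆ A'' := by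
          have := MZ.closure_subset_closure (singleton_subset_iff.2 hd.1)
          rwa [hA''flatMZ.closure] at this
        have h2 : mrank MZ (MZ.closure {d}) = 1 := by
          rw [mrank_closure_eq]
          exact mrank_singleton hMZloop hdMZE
        exact (flat_eq_of_subset_of_mrank_le (closure_flat' MZ _) hA''flatMZ h1
          (by rw [hA''rank, h2])).symm
      have hDgood : GoodLabel M N X (M.closure {d}) := by
        refine ⟨hDatom, hDX, ?_⟩
        intro Y hYN hYX hDY
        have hdY : d ∈ Y := hDY hdD
        obtain ⟨hYflat, hYne⟩ := hB.1 Y (hNB hYN)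
        have hYE := hYflat.subset_ground
        have hYsubZ : ¬ Y ⊆ Z := fun h => hdE.2 (h hdY)
        have htY : tau M Z Y = M.closure (Y ∪ Z) \ Z := if_neg hYsubZ
        have hA''tauY : A'' ⊆ tau M Z Y := by
          rw [hA''eq, htY, contract_closure_eq' hMZ hZE hJ
            (singleton_subset_iff.2 hdE)]
          refine diff_subset_diff_left (M.closure_subset_closure ?_)
          exact union_subset_union_left Z (singleton_subset_iff.2 hdY)
        have hsub' : tau M Z Y ⊆ tau M Z X := by
          rw [htauX, htY]
          exact diff_subset_diff_left (M.closure_subset_closure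
            (union_subset_union_left Z hYX.subset))
        have hne' : tau M Z Y ≠ tau M Z X := by
          intro heq
          rw [htauX, htY] at heq
          have hZY1 : Z ⊆ M.closure (Y ∪ Z) :=
            (subset_union_right).trans (M.subset_closure _ (union_subset hYE hZE))
          have hZX1 : Z ⊆ M.closure (X ∪ Z) :=
            (subset_union_right).trans (M.subset_closure _ (union_subset hXE hZE))
          have hcleq : M.closure (Y ∪ Z) = M.closure (X ∪ Z) := by
            rw [← diff_union_of_subset hZY1, ← diff_union_of_subset hZX1, heq]
          have hXclY : X ⊆ M.closure (Y ∪ Z) := by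
            rw [hcleq]
            exact (subset_union_left).trans (M.subset_closure _ (union_subset hXE hZE))
          rcases nested_trichotomy hB hN' hYN hZ with h | hZY | hYZdisj
          · exact hYsubZ h
          · rw [union_eq_self_of_subset_right hZY, hYflat.closure] at hXclY
            exact hYX.not_subset hXclY
          · have hZY2 : ¬ Z ⊆ Y := fun h => by
              obtain ⟨z, hz⟩ := hZne
              exact (eq_empty_iff_forall_notMem.mp hYZdisj z) ⟨h hz, hz⟩
            have hNU := nested_union_eq hM hB hN' hYN hZ hYsubZ hZY2
            rw [hNU.1] at hXclY
            obtain ⟨x, hxX, hxY⟩ := exists_of_ssubset hYX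
            have hxZ : x ∈ Z := (hXclY hxX).resolve_left hxY
            have hZX : Z ⊆ X := by
              rcases nested_trichotomy hB hN' hZ hX with h' | h' | h'
              · exact h'
              · exact absurd h' hXnsub
              · exact ((eq_empty_iff_forall_notMem.mp h' x) ⟨hxZ, hxX⟩).elim
            have hXeq : X = Y ∪ Z :=
              subset_antisymm hXclY (union_subset hYX.subset hZX)
            have hYneZ : Y ≠ Z := fun h => by
              obtain ⟨y0, hy0⟩ := hYne
              exact (eq_empty_iff_forall_notMem.mp hYZdisj y0) ⟨hy0, h ▸ hy0⟩
            have hpw : ({Y, Z} : Set (Set α)).Pairwise Incomp := by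
              intro a ha b hb hab
              rw [Set.mem_insert_iff, Set.mem_singleton_iff] at ha hb
              rcases ha with rfl | rfl <;> rcases hb with rfl | rfl
              · exact absurd rfl hab
              · exact ⟨hYsubZ, hZY2⟩
              · exact ⟨hZY2, hYsubZ⟩
              · exact absurd rfl hab
            have hcontra := hNjoin {Y, Z} (by
                intro S hS
                rw [Set.mem_insert_iff, Set.mem_singleton_iff] at hS
                rcases hS with rfl | rfl
                · exact hYN
                · exact hZ)
              (Set.nontrivial_pair hYneZ) hpw
            rw [Set.sUnion_pair, hNU.1, ← hXeq] at hcontra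
            exact hcontra hXB
        exact hA''good (tau M Z Y) ⟨Y, hYN, rfl⟩
          (ssubset_iff_subset_ne.mpr ⟨hsub', hne'⟩) hA''tauY
      obtain ⟨a₀, d₀, hla, hld, had⟩ := hAmin (M.closure {d}) hDgood
      obtain ⟨astar, hlastar⟩ := exists_isLeast hAstar_ne
      refine ⟨astar, d, hlastar, hd, ?_⟩
      calc astar ≤ a₀ := hlastar.2 (hAAstar hla.1)
      _ ≤ d₀ := had
      _ ≤ d := hld.2 hdD
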